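/- Invariant of the ESL iteration: let G be a game with integer weights, and define G₀ = G, φ_j = En⁺_{G_j}, G_{j+1} = (G_j)_{φ_j}, and Φ_j = φ₀ + ⋯ + φ_{j−1}. Then for every j ≥ 0, the potential Φ_j is sound for G (Φ_j ≤ En_G pointwise) and En_G(v) = Φ_j(v) + En_{G_j}(v) for all v ∈ V. -/

import Mathlib

attribute [local instance] Classical.propDecidable

/-- A game: a directed graph `E` on vertex set `V` with no sink, edge weights `wt : V → V → R`,
and a partition of the vertices into those belonging to Min (`isMin`) and to Max (the rest). -/
structure Game (V : Type) (R : Type) where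
  E : V → V → Prop
  wt : V → V → R
  isMin : V → Prop
  nosink : ∀ v, ∃ u, E v u

namespace Game

variable {V : Type} {R : Type}

/-- A strategy for Min: a choice of an outgoing edge at every Min vertex. -/
def MinStrat (G : Game V R) : Type := {σ : V → V // ∀ v, G.isMin v → G.E v (σ v)}

/-- A strategy for Max: a choice of an outgoing edge at every Max vertex. -/
def MaxStrat (G : Game V R) : Type := {τ : V → V // ∀ v, ¬ G.isMin v → G.E v (τ v)}

/-- An infinite path in the graph. -/
def IsPath (G : Game V R) (π : ℕ → V) : Prop := ∀ i, G.E (π i) (π (i + 1))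

/-- Consistency of an infinite path with a Min strategy. -/
def ConsMin (G : Game V R) (σ : G.MinStrat) (π : ℕ → V) : Prop :=
  ∀ i, G.isMin (π i) → π (i + 1) = σ.1 (π i)

/-- Consistency of an infinite path with a Max strategy. -/
def ConsMax (G : Game V R) (τ : G.MaxStrat) (π : ℕ → V) : Prop :=
  ∀ i, ¬ G.isMin (π i) → π (i + 1) = τ.1 (π i)

/-- Infinite paths starting in `v` consistent with the Min strategy `σ`. -/
def PlaysMin (G : Game V R) (σ : G.MinStrat) (v : V) : Type :=
  {π : ℕ → V // π 0 = v ∧ G.IsPath π ∧ G.ConsMin σ π}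

/-- Infinite paths starting in `v` consistent with the Max strategy `τ`. -/
def PlaysMax (G : Game V R) (τ : G.MaxStrat) (v : V) : Type :=
  {π : ℕ → V // π 0 = v ∧ G.IsPath π ∧ G.ConsMax τ π}

/-- The sequence of weights along an infinite path. -/
def wseq (G : Game V R) (π : ℕ → V) : ℕ → R := fun i => G.wt (π i) (π (i + 1))

/-- Embedding of `ℤ ∪ {∞}` into the extended reals. -/
noncomputable def toE (x : WithTop ℤ) : EReal :=
  if h : x = ⊤ then ⊤ else (((x.untop h : ℤ) : ℝ) : EReal)

/-- Embedding of `ℕ ∪ {∞}` into the extended reals. -/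
noncomputable def enatToE (x : ENat) : EReal :=
  if x = ⊤ then ⊤ else ((x.toNat : ℝ) : EReal)

/-- Conversion `ℤ ∪ {∞} → ℕ ∪ {∞}` (exact on non-negative values). -/
noncomputable def wToN (x : WithTop ℤ) : ENat :=
  if h : x = ⊤ then ⊤ else ((x.untop h).toNat : ENat)

/-- The mean-payoff valuation `MP(w₀w₁⋯) = limsup_k (1/k) ∑_{i<k} w_i`. -/
noncomputable def MPv (w : ℕ → ℤ) : EReal :=
  Filter.limsup
    (fun k : ℕ => ((((∑ i ∈ Finset.range k, w i : ℤ) : ℝ) / (k : ℝ) : ℝ) : EReal))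
    Filter.atTop

/-- The energy valuation `En(w₀w₁⋯) = sup_k ∑_{i<k} w_i` (weights given in `EReal`). -/
noncomputable def En (w : ℕ → EReal) : EReal :=
  ⨆ k : ℕ, ∑ i ∈ Finset.range k, w i

/-- The positive-energy valuation `En⁺(w₀w₁⋯) = ∑_{i<k¬} w_i ∈ ℕ ∪ {∞}` where `k¬` is the
first index of a negative weight (the whole, possibly infinite, sum if no weight is negative). -/
noncomputable def EnP (w : ℕ → WithTop ℤ) : ENat :=
  if h : ∃ k, w k < 0 then ∑ i ∈ Finset.range (Nat.find h), wToN (w i)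
  else ⨆ k : ℕ, ∑ i ∈ Finset.range k, wToN (w i)

/-- The mean-payoff value of a vertex:
`MP_G(v) = inf over Min strategies σ of sup over plays π from v consistent with σ of MP(w(π))`. -/
noncomputable def MPVal (G : Game V ℤ) (v : V) : EReal :=
  ⨅ σ : G.MinStrat, ⨆ π : G.PlaysMin σ v, MPv (G.wseq π.1)

/-- The energy value of a vertex. -/
noncomputable def EnVal (G : Game V (WithTop ℤ)) (v : V) : EReal :=
  ⨅ σ : G.MinStrat, ⨆ π : G.PlaysMin σ v, En (fun i => toE (G.wseq π.1 i))

/-- The positive-energy value of a vertex. -/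
noncomputable def EnPVal (G : Game V (WithTop ℤ)) (v : V) : ENat :=
  ⨅ σ : G.MinStrat, ⨆ π : G.PlaysMin σ v, EnP (G.wseq π.1)

/-- Lift a game with integer weights to a game with weights in `ℤ ∪ {∞}`. -/
def liftZ (G : Game V ℤ) : Game V (WithTop ℤ) :=
  { E := G.E, wt := fun u v => (G.wt u v : WithTop ℤ), isMin := G.isMin, nosink := G.nosink }

/-- The `φ`-modified weight: `w_φ(v,v') = w(v,v') + φ(v') − φ(v)` when `w(v,v')`, `φ(v)`, `φ(v')`
are all finite, and `∞` otherwise. -/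
noncomputable def modWt (w : V → V → WithTop ℤ) (φ : V → ENat) (u v : V) : WithTop ℤ :=
  if w u v = ⊤ ∨ φ u = ⊤ ∨ φ v = ⊤ then ⊤
  else (((w u v).untopD 0 + ((φ v).toNat : ℤ) - ((φ u).toNat : ℤ) : ℤ) : WithTop ℤ)

/-- The `φ`-modified game `G_φ`. -/
noncomputable def modify (G : Game V (WithTop ℤ)) (φ : V → ENat) : Game V (WithTop ℤ) :=
  { G with wt := modWt G.wt φ }

/-- `π 0 → π 1 → ⋯ → π k` is a simple cycle: `k ≥ 1`, consecutive edges, `π k = π 0`,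
and `π 0, …, π (k-1)` pairwise distinct. -/
def IsSimpleCycle (G : Game V R) (π : ℕ → V) (k : ℕ) : Prop :=
  1 ≤ k ∧ (∀ i < k, G.E (π i) (π (i + 1))) ∧ π k = π 0 ∧
    ∀ i < k, ∀ j < k, π i = π j → i = j

/-- A game is simple if every simple cycle has nonzero sum of weights. -/
def IsSimpleR [AddCommMonoid R] (G : Game V R) : Prop :=
  ∀ π k, IsSimpleCycle G π k → (∑ i ∈ Finset.range k, G.wt (π i) (π (i + 1))) ≠ 0

/-- `W = max_{e ∈ E} |w(e)|`. -/
noncomputable def maxW (G : Game V ℤ) [Fintype V] : ℕ :=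
  Finset.sup Finset.univ (fun p : V × V => if G.E p.1 p.2 then (G.wt p.1 p.2).natAbs else 0)

/-- The ESL iteration: `G₀ = G` and `G_{j+1} = (G_j)_{φ_j}` where `φ_j = En⁺_{G_j}`. -/
noncomputable def esl (G : Game V (WithTop ℤ)) : ℕ → Game V (WithTop ℤ)
  | 0 => G
  | j + 1 => modify (esl G j) (EnPVal (esl G j))

/-- The accumulated ESL potential `Φ_j = φ₀ + ⋯ + φ_{j−1}`. -/
noncomputable def eslPhi (G : Game V (WithTop ℤ)) (j : ℕ) (v : V) : ENat :=
  ∑ i ∈ Finset.range j, EnPVal (esl G i) v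

/-- The set of vertices from which Min can ensure to immediately visit a negative-weight edge:
Min vertices with some negative outgoing edge, and Max vertices all of whose outgoing edges
are negative. -/
def NegSet (G : Game V (WithTop ℤ)) : Set V :=
  {v | (G.isMin v ∧ ∃ u, G.E v u ∧ G.wt v u < 0) ∨
       (¬ G.isMin v ∧ ∀ u, G.E v u → G.wt v u < 0)}

end Game

open Game

/-!
For a potential `φ` with `φ ≤ En_G`, one has `En_G = φ + En_{G_φ}`. Along any path the modified
partial sums telescope, `φ(v₀) + ∑_{i<k} w_φ = ∑_{i<k} w + φ(v_k)`, as long as `φ` is finite on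
`v₀, …, v_{k-1}`; otherwise some modified weight is already `∞`. This gives `En_G ≤ φ + En_{G_φ}`
play by play. Conversely, Min strategies are positional, so against a fixed `σ` Max may follow any
prefix of a `σ`-play to `v_k` and then any `σ`-play from `v_k`; hence
`∑_{i<k} w + En^σ(v_k) ≤ En^σ(v₀)`, and `φ ≤ En_G ≤ En^σ` turns this into `φ + En_{G_φ} ≤ En_G`.
Since `En⁺ ≤ En` pathwise, `φ_j = En⁺_{G_j}` is sound for `G_j`, so the identity propagates along
the iteration; soundness of `Φ_j` follows because energies are nonnegative.
-/

open Finset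

namespace EReal

lemma add_iSup_of_ne_bot {ι : Sort*} [Nonempty ι] {c : EReal} (hc : c ≠ ⊥) {f : ι → EReal}
    (hf : ⨆ i, f i ≠ ⊥) : c + ⨆ i, f i = ⨆ i, (c + f i) :=
  Monotone.map_ciSup_of_continuousAt
    ((continuousAt_add (p := (c, ⨆ i, f i)) (.inr hf) (.inl hc)).comp (by fun_prop))
    (fun _ _ h => add_le_add_right h c)

lemma add_iInf_of_ne_bot {ι : Sort*} [Nonempty ι] {c : EReal} (hc : c ≠ ⊥) {f : ι → EReal}
    (hf : ⨅ i, f i ≠ ⊥) : c + ⨅ i, f i = ⨅ i, (c + f i) :=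
  Monotone.map_ciInf_of_continuousAt
    ((continuousAt_add (p := (c, ⨅ i, f i)) (.inr hf) (.inl hc)).comp (by fun_prop))
    (fun _ _ h => add_le_add_right h c)

end EReal

namespace Game

lemma enatToE_top : enatToE ⊤ = ⊤ := by simp [enatToE]

lemma enatToE_natCast (n : ℕ) : enatToE n = ((n : ℝ) : EReal) := by simp [enatToE]

lemma enatToE_eq_coe (x : ENat) : enatToE x = ((x : ENNReal) : EReal) := by
  cases x
  · exact enatToE_top
  · exact enatToE_natCast _

lemma enatToE_nonneg (x : ENat) : 0 ≤ enatToE x := by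
  simpa [enatToE_eq_coe] using EReal.coe_ennreal_nonneg _

lemma enatToE_ne_bot (x : ENat) : enatToE x ≠ ⊥ := by
  simp [enatToE_eq_coe]

lemma enatToE_add (x y : ENat) : enatToE (x + y) = enatToE x + enatToE y := by
  simp [enatToE_eq_coe, EReal.coe_ennreal_add]

lemma enatToE_zero : enatToE 0 = 0 := by simp [enatToE_eq_coe]

lemma enatToE_monotone : Monotone enatToE := fun x y h => by
  simpa [enatToE_eq_coe] using h

lemma enatToE_sum {α : Type*} (s : Finset α) (f : α → ENat) :
    enatToE (∑ i ∈ s, f i) = ∑ i ∈ s, enatToE (f i) :=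
  map_sum (⟨⟨enatToE, enatToE_zero⟩, enatToE_add⟩ : ENat →+ EReal) f s

lemma enatToE_iSup {ι : Sort*} [Nonempty ι] (f : ι → ENat) :
    enatToE (⨆ i, f i) = ⨆ i, enatToE (f i) := by
  simp only [enatToE_eq_coe]
  exact Monotone.map_ciSup_of_continuousAt
    ((continuous_coe_ennreal_ereal.comp ENat.continuous_toENNReal).continuousAt)
    (fun _ _ h => by simpa using h)

lemma toE_top : toE ⊤ = ⊤ := by simp [toE]

lemma toE_ne_bot (x : WithTop ℤ) : toE x ≠ ⊥ := by
  unfold toE; split <;> simp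

lemma toE_coe (z : ℤ) : toE z = ((z : ℝ) : EReal) := by simp [toE]

lemma enatToE_wToN {x : WithTop ℤ} (hx : 0 ≤ x) : enatToE (wToN x) = toE x := by
  induction x using WithTop.recTopCoe with
  | top => simp [wToN, enatToE_top, toE_top]
  | coe z =>
    have hz : 0 ≤ z := by exact_mod_cast hx
    simp only [wToN, enatToE, toE, WithTop.coe_ne_top, ENat.natCast_ne_top, ↓reduceDIte,
      ↓reduceIte, WithTop.untop_coe, ENat.toNat_natCast, EReal.coe_natCast]
    exact_mod_cast Int.toNat_of_nonneg hz

lemma sum_toE_ne_bot {α : Type*} (s : Finset α) (f : α → WithTop ℤ) :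
    ∑ i ∈ s, toE (f i) ≠ ⊥ :=
  Finset.sum_induction _ (· ≠ ⊥) (fun _ _ ha hb => EReal.add_ne_bot_iff.mpr ⟨ha, hb⟩)
    EReal.zero_ne_bot fun i _ => toE_ne_bot (f i)

lemma sum_le_En (w : ℕ → EReal) (k : ℕ) : ∑ i ∈ range k, w i ≤ En w :=
  le_iSup (fun k => ∑ i ∈ range k, w i) k

lemma En_nonneg (w : ℕ → EReal) : 0 ≤ En w := by
  simpa using sum_le_En w 0

lemma enatToE_EnP_le_En (w : ℕ → WithTop ℤ) :
    enatToE (EnP w) ≤ En (fun i => toE (w i)) := by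
  unfold EnP
  split_ifs with h
  · rw [enatToE_sum, sum_congr rfl fun i hi =>
      enatToE_wToN (not_lt.mp (Nat.find_min h (mem_range.mp hi)))]
    exact sum_le_En _ _
  · push Not at h
    rw [enatToE_iSup]
    refine iSup_le fun k => ?_
    rw [enatToE_sum, sum_congr rfl fun i _ => enatToE_wToN (h i)]
    exact sum_le_En _ k

variable {V R : Type}

instance (G : Game V R) : Nonempty G.MinStrat :=
  ⟨⟨fun u => (G.nosink u).choose, fun u _ => (G.nosink u).choose_spec⟩⟩

noncomputable def MinStrat.next {G : Game V R} (σ : G.MinStrat) (u : V) : V :=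
  if G.isMin u then σ.1 u else (G.nosink u).choose

lemma MinStrat.edge_next {G : Game V R} (σ : G.MinStrat) (u : V) : G.E u (σ.next u) := by
  unfold MinStrat.next
  split_ifs with h
  · exact σ.2 u h
  · exact (G.nosink u).choose_spec

instance (G : Game V R) (σ : G.MinStrat) (v : V) : Nonempty (G.PlaysMin σ v) := by
  refine ⟨⟨fun n => σ.next^[n] v, rfl, fun i => ?_, fun i hi => ?_⟩⟩ <;>
    simp only [Function.iterate_succ_apply']
  · exact σ.edge_next _
  · simp [MinStrat.next, hi]

def splice (π π' : ℕ → V) (k : ℕ) : ℕ → V :=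
  fun n => if n < k then π n else π' (n - k)

section splice

variable {π π' : ℕ → V} {k : ℕ}

lemma splice_of_lt {n : ℕ} (h : n < k) : splice π π' k n = π n := if_pos h

lemma splice_add (n : ℕ) : splice π π' k (k + n) = π' n := by
  simp [splice]

lemma splice_of_le (h0 : π' 0 = π k) {n : ℕ} (h : n ≤ k) : splice π π' k n = π n := by
  rcases h.lt_or_eq with h | rfl
  · exact splice_of_lt h
  · simpa [h0] using splice_add (π := π) (π' := π') (k := n) 0

lemma forall_splice_step {P : V → V → Prop} (h0 : π' 0 = π k)
    (hπ : ∀ i < k, P (π i) (π (i + 1))) (hπ' : ∀ i, P (π' i) (π' (i + 1))) (i : ℕ) :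
    P (splice π π' k i) (splice π π' k (i + 1)) := by
  rcases lt_or_ge i k with h | h
  · rw [splice_of_le h0 h.le, splice_of_le h0 h]
    exact hπ i h
  · obtain ⟨n, rfl⟩ := Nat.exists_eq_add_of_le h
    rw [add_assoc, splice_add, splice_add]
    exact hπ' n

lemma sum_range_wseq_splice {M : Type*} [AddCommMonoid M] (G : Game V R) (f : R → M)
    (h0 : π' 0 = π k) (m : ℕ) :
    ∑ i ∈ range (k + m), f (G.wseq (splice π π' k) i)
      = ∑ i ∈ range k, f (G.wseq π i) + ∑ i ∈ range m, f (G.wseq π' i) := by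
  rw [sum_range_add]
  congr 1
  · exact sum_congr rfl fun i hi => by
      rw [wseq, wseq, splice_of_le h0 (mem_range.mp hi).le, splice_of_le h0 (mem_range.mp hi)]
  · exact sum_congr rfl fun i _ => by rw [wseq, wseq, add_assoc, splice_add, splice_add]

end splice

def PlaysMin.splice {G : Game V R} {σ : G.MinStrat} {v : V} (π : G.PlaysMin σ v) (k : ℕ)
    (π' : G.PlaysMin σ (π.1 k)) : G.PlaysMin σ v :=
  ⟨Game.splice π.1 π'.1 k, (splice_of_le π'.2.1 k.zero_le).trans π.2.1,
    forall_splice_step (P := G.E) π'.2.1 (fun i _ => π.2.2.1 i) π'.2.2.1,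
    forall_splice_step (P := fun u u' => G.isMin u → u' = σ.1 u) π'.2.1
      (fun i _ => π.2.2.2 i) π'.2.2.2⟩

noncomputable def EnStrat (G : Game V (WithTop ℤ)) (σ : G.MinStrat) (v : V) : EReal :=
  ⨆ π : G.PlaysMin σ v, En (fun i => toE (G.wseq π.1 i))

section strategy

variable (G : Game V (WithTop ℤ)) {σ : G.MinStrat} {v : V}

lemma En_le_EnStrat (π : G.PlaysMin σ v) : En (fun i => toE (G.wseq π.1 i)) ≤ G.EnStrat σ v :=
  le_iSup (fun π : G.PlaysMin σ v => En fun i => toE (G.wseq π.1 i)) π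

lemma EnStrat_nonneg (σ : G.MinStrat) (v : V) : 0 ≤ G.EnStrat σ v :=
  (En_nonneg _).trans (G.En_le_EnStrat (Classical.arbitrary (G.PlaysMin σ v)))

lemma EnVal_nonneg (v : V) : 0 ≤ G.EnVal v :=
  le_iInf fun σ => G.EnStrat_nonneg σ v

lemma sum_add_EnStrat_le (π : G.PlaysMin σ v) (k : ℕ) :
    ∑ i ∈ range k, toE (G.wseq π.1 i) + G.EnStrat σ (π.1 k) ≤ G.EnStrat σ v := by
  have hS := sum_toE_ne_bot (range k) (G.wseq π.1)
  rw [EnStrat, EReal.add_iSup_of_ne_bot hS (ne_bot_of_le_ne_bot EReal.zero_ne_bot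
    (G.EnStrat_nonneg σ _))]
  refine iSup_le fun π' => ?_
  rw [En, EReal.add_iSup_of_ne_bot hS (ne_bot_of_le_ne_bot EReal.zero_ne_bot (En_nonneg _))]
  refine iSup_le fun m => ?_
  rw [← sum_range_wseq_splice G toE π'.2.1]
  exact (sum_le_En _ _).trans (G.En_le_EnStrat (π.splice k π'))

lemma enatToE_EnPVal_le_EnStrat (σ : G.MinStrat) (v : V) :
    enatToE (G.EnPVal v) ≤ G.EnStrat σ v :=
  calc enatToE (G.EnPVal v) ≤ enatToE (⨆ π : G.PlaysMin σ v, EnP (G.wseq π.1)) :=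
        enatToE_monotone (iInf_le _ σ)
    _ = ⨆ π : G.PlaysMin σ v, enatToE (EnP (G.wseq π.1)) := enatToE_iSup _
    _ ≤ G.EnStrat σ v := iSup_mono fun _ => enatToE_EnP_le_En _

lemma enatToE_EnPVal_le_EnVal (v : V) : enatToE (G.EnPVal v) ≤ G.EnVal v :=
  le_iInf fun σ => G.enatToE_EnPVal_le_EnStrat σ v

end strategy

section modify

variable {w : V → V → WithTop ℤ} {φ : V → ENat} {u u' : V}

lemma toE_modWt_of_left_eq_top (h : φ u = ⊤) : toE (modWt w φ u u') = ⊤ := by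
  simp [modWt, h, toE_top]

/-- Holds even when `w u u'` or `φ u'` is infinite: then both sides are `⊤`. -/
lemma enatToE_add_toE_modWt (hu : φ u ≠ ⊤) :
    enatToE (φ u) + toE (modWt w φ u u') = toE (w u u') + enatToE (φ u') := by
  by_cases hw : w u u' = ⊤
  · simp [modWt, hw, toE_top, EReal.add_top_of_ne_bot (enatToE_ne_bot _),
      EReal.top_add_of_ne_bot (enatToE_ne_bot _)]
  by_cases hu' : φ u' = ⊤
  · simp [modWt, hu', toE_top, EReal.add_top_of_ne_bot (enatToE_ne_bot _),
      EReal.add_top_of_ne_bot (toE_ne_bot _), enatToE_top]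
  rw [modWt, if_neg (by tauto)]
  lift w u u' to ℤ using hw with z
  lift φ u to ℕ using hu with m
  lift φ u' to ℕ using hu' with n
  simp only [WithTop.untopD_coe, ENat.toNat_natCast, toE_coe, enatToE_natCast]
  rw [← EReal.coe_add, ← EReal.coe_add]
  congr 1
  push_cast
  ring

variable (G : Game V (WithTop ℤ)) (φ : V → ENat)

lemma enatToE_add_sum_modify (π : ℕ → V) (k : ℕ) (hφ : ∀ i < k, φ (π i) ≠ ⊤) :
    enatToE (φ (π 0)) + ∑ i ∈ range k, toE ((G.modify φ).wseq π i)
      = ∑ i ∈ range k, toE (G.wseq π i) + enatToE (φ (π k)) := by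
  induction k with
  | zero => simp
  | succ k ih =>
    rw [sum_range_succ, sum_range_succ, ← add_assoc, ih fun i hi => hφ i (by omega), add_assoc,
      wseq, modify, enatToE_add_toE_modWt (hφ k k.lt_succ_self), ← add_assoc]
    rfl

lemma En_le_add_En_modify (π : ℕ → V) :
    En (fun i => toE (G.wseq π i))
      ≤ enatToE (φ (π 0)) + En (fun i => toE ((G.modify φ).wseq π i)) := by
  refine iSup_le fun k => ?_
  by_cases hfin : ∀ i < k, φ (π i) ≠ ⊤
  · calc ∑ i ∈ range k, toE (G.wseq π i)
          ≤ ∑ i ∈ range k, toE (G.wseq π i) + enatToE (φ (π k)) :=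
          le_add_of_nonneg_right (enatToE_nonneg _)
      _ = enatToE (φ (π 0)) + ∑ i ∈ range k, toE ((G.modify φ).wseq π i) :=
          (G.enatToE_add_sum_modify φ π k hfin).symm
      _ ≤ _ := add_le_add_right (sum_le_En _ k) _
  · push Not at hfin
    obtain ⟨i, -, hi⟩ := hfin
    have hEn : En (fun i => toE ((G.modify φ).wseq π i)) = ⊤ := by
      refine top_le_iff.mp ((sum_le_En _ (i + 1)).trans' ?_)
      rw [sum_range_succ, wseq, modify, toE_modWt_of_left_eq_top hi,
        EReal.add_top_of_ne_bot (sum_toE_ne_bot _ _)]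
    rw [hEn, EReal.add_top_of_ne_bot (enatToE_ne_bot _)]
    exact le_top

lemma add_sum_modify_le_EnStrat {σ : G.MinStrat} (hφ : ∀ u, enatToE (φ u) ≤ G.EnStrat σ u)
    {v : V} (π : G.PlaysMin σ v) (k : ℕ) :
    enatToE (φ v) + ∑ i ∈ range k, toE ((G.modify φ).wseq π.1 i) ≤ G.EnStrat σ v := by
  have hprefix (j : ℕ) :
      ∑ i ∈ range j, toE (G.wseq π.1 i) + enatToE (φ (π.1 j)) ≤ G.EnStrat σ v :=
    (add_le_add_right (hφ _) _).trans (G.sum_add_EnStrat_le π j)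
  by_cases hfin : ∀ i < k, φ (π.1 i) ≠ ⊤
  · calc enatToE (φ v) + ∑ i ∈ range k, toE ((G.modify φ).wseq π.1 i)
          = ∑ i ∈ range k, toE (G.wseq π.1 i) + enatToE (φ (π.1 k)) := by
          rw [← G.enatToE_add_sum_modify φ π.1 k hfin, π.2.1]
      _ ≤ G.EnStrat σ v := hprefix k
  · push Not at hfin
    obtain ⟨i, -, hi⟩ := hfin
    have := hprefix i
    rw [hi, enatToE_top, EReal.add_top_of_ne_bot (sum_toE_ne_bot _ _), top_le_iff] at this
    exact this ▸ le_top

/-- The modified game has the same strategies and plays as `G`. -/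
lemma EnVal_modify (v : V) :
    (G.modify φ).EnVal v = ⨅ σ : G.MinStrat,
      ⨆ π : G.PlaysMin σ v, En (fun i => toE ((G.modify φ).wseq π.1 i)) :=
  rfl

theorem EnVal_eq_add_EnVal_modify (hφ : ∀ u, enatToE (φ u) ≤ G.EnVal u) (v : V) :
    G.EnVal v = enatToE (φ v) + (G.modify φ).EnVal v := by
  have hc := enatToE_ne_bot (φ v)
  have ne_bot {x : EReal} (hx : 0 ≤ x) : x ≠ ⊥ := ne_bot_of_le_ne_bot EReal.zero_ne_bot hx
  apply le_antisymm
  · calc G.EnVal v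
        ≤ ⨅ σ : G.MinStrat, ⨆ π : G.PlaysMin σ v,
            (enatToE (φ v) + En (fun i => toE ((G.modify φ).wseq π.1 i))) :=
          iInf_mono fun σ => iSup_mono fun π => by
            simpa only [π.2.1] using G.En_le_add_En_modify φ π.1
      _ = ⨅ σ : G.MinStrat, (enatToE (φ v)
            + ⨆ π : G.PlaysMin σ v, En (fun i => toE ((G.modify φ).wseq π.1 i))) :=
          iInf_congr fun σ => (EReal.add_iSup_of_ne_bot (ι := G.PlaysMin σ v) hc
            (ne_bot ((G.modify φ).EnStrat_nonneg σ v))).symm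
      _ = enatToE (φ v) + (G.modify φ).EnVal v :=
          (EReal.add_iInf_of_ne_bot (ι := G.MinStrat) hc
            (ne_bot ((G.modify φ).EnVal_nonneg v))).symm
  · refine le_iInf fun σ => ?_
    calc enatToE (φ v) + (G.modify φ).EnVal v
        ≤ enatToE (φ v)
            + ⨆ π : G.PlaysMin σ v, En (fun i => toE ((G.modify φ).wseq π.1 i)) :=
          add_le_add_right (iInf_le _ σ) _
      _ = ⨆ π : G.PlaysMin σ v, ⨆ k,
            (enatToE (φ v) + ∑ i ∈ range k, toE ((G.modify φ).wseq π.1 i)) := by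
        rw [EReal.add_iSup_of_ne_bot (ι := G.PlaysMin σ v) hc
          (ne_bot ((G.modify φ).EnStrat_nonneg σ v))]
        exact iSup_congr fun π => EReal.add_iSup_of_ne_bot hc (ne_bot (En_nonneg _))
      _ ≤ G.EnStrat σ v := iSup_le fun π =>
          iSup_le (G.add_sum_modify_le_EnStrat φ (fun u => (hφ u).trans (iInf_le _ σ)) π)

end modify

lemma esl_succ (G : Game V (WithTop ℤ)) (j : ℕ) :
    esl G (j + 1) = (esl G j).modify (esl G j).EnPVal := rfl

lemma eslPhi_succ (G : Game V (WithTop ℤ)) (j : ℕ) (v : V) :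
    eslPhi G (j + 1) v = eslPhi G j v + (esl G j).EnPVal v := sum_range_succ _ _

theorem EnVal_eq_eslPhi_add_EnVal_esl (G : Game V (WithTop ℤ)) (j : ℕ) (v : V) :
    G.EnVal v = enatToE (eslPhi G j v) + (esl G j).EnVal v := by
  induction j generalizing v with
  | zero => simp [eslPhi, esl, enatToE_zero]
  | succ j ih =>
    rw [ih, eslPhi_succ, esl_succ, enatToE_add, add_assoc,
      ← EnVal_eq_add_EnVal_modify _ _ (esl G j).enatToE_EnPVal_le_EnVal]

end Game

theorem esl_invariant_general {V : Type} (G : Game V ℤ) (j : ℕ) :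
    (∀ v : V, enatToE (eslPhi (liftZ G) j v) ≤ EnVal (liftZ G) v) ∧
    (∀ v : V, EnVal (liftZ G) v
        = enatToE (eslPhi (liftZ G) j v) + EnVal (esl (liftZ G) j) v) := by
  refine ⟨fun v => ?_, EnVal_eq_eslPhi_add_EnVal_esl (liftZ G) j⟩
  rw [EnVal_eq_eslPhi_add_EnVal_esl (liftZ G) j v]
  exact le_add_of_nonneg_right (EnVal_nonneg _ v)

/-- Invariant of the ESL iteration: `Φ_j` is sound for `G` and `En_G = Φ_j + En_{G_j}`. -/
theorem esl_invariant {V : Type} [Fintype V] (G : Game V ℤ) (j : ℕ) :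
    (∀ v : V, enatToE (eslPhi (liftZ G) j v) ≤ EnVal (liftZ G) v) ∧
    (∀ v : V, EnVal (liftZ G) v
        = enatToE (eslPhi (liftZ G) j v) + EnVal (esl (liftZ G) j) v) :=
  esl_invariant_general G j
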